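/- If a machine can be bought at most once over the planning horizon (Σ_t Σ_{e∈E¹} X^t(e) ≤ 1), and discarding requires having previously entered operation, then under the continuity constraints the machine is discarded at most once: Σ_t Σ_{e∈E³} X^t(e) ≤ 1. -/
import Mathlib

open Finset

lemma split_eq (Y : Fin 4 × Fin 4 → ℕ) :
    ∑ e ∈ Finset.univ.filter (fun e : Fin 4 × Fin 4 => e.1 = 0), Y e
      + ∑ e ∈ Finset.univ.filter (fun e : Fin 4 × Fin 4 => e.1 ≠ 0 ∧ e.2 = 0), Y e =
    ∑ e ∈ Finset.univ.filter (fun e : Fin 4 × Fin 4 => e.2 = 0), Y e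
      + ∑ e ∈ Finset.univ.filter (fun e : Fin 4 × Fin 4 => e.1 = 0 ∧ e.2 ≠ 0), Y e := by
  simp [Finset.sum_filter, Fintype.sum_prod_type, Fin.sum_univ_four]
  omega

lemma bound_le (Y : Fin 4 × Fin 4 → ℕ) :
    ∑ e ∈ Finset.univ.filter (fun e : Fin 4 × Fin 4 => e.1 = 0), Y e
      + ∑ e ∈ Finset.univ.filter (fun e : Fin 4 × Fin 4 => e.1 ≠ 0 ∧ e.2 = 0), Y e ≤
    ∑ e : Fin 4 × Fin 4, Y e := by
  simp [Finset.sum_filter, Fintype.sum_prod_type, Fin.sum_univ_four]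
  omega

lemma total_split (Y : Fin 4 × Fin 4 → ℕ) :
    ∑ e : Fin 4 × Fin 4, Y e =
    ∑ e ∈ Finset.univ.filter (fun e : Fin 4 × Fin 4 => e.1 = 0), Y e
      + ∑ e ∈ Finset.univ.filter (fun e : Fin 4 × Fin 4 => ¬ e.1 = 0), Y e := by
  simp [Finset.sum_filter, Fintype.sum_prod_type, Fin.sum_univ_four]
  omega

open Finset in
/-- If a machine can be bought at most once and starts in state 0, then under
the continuity constraints it is discarded at most once. -/
theorem discard_at_most_once (Tmax : ℕ) (hT : 1 ≤ Tmax)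
    (X : ℕ → Fin 4 × Fin 4 → ℕ)
    (hbin : ∀ t e, X t e = 0 ∨ X t e = 1)
    (hone : ∀ t, 1 ≤ t → t ≤ Tmax → ∑ e : Fin 4 × Fin 4, X t e = 1)
    (hcont : ∀ s : Fin 4, ∀ t, 1 ≤ t → t < Tmax →
      ∑ e ∈ Finset.univ.filter (fun e : Fin 4 × Fin 4 => e.1 = s), X (t + 1) e =
      ∑ e ∈ Finset.univ.filter (fun e : Fin 4 × Fin 4 => e.2 = s), X t e)
    (hstart : ∀ e : Fin 4 × Fin 4, X 1 e = 1 → e.1 = 0)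
    (hbuy : ∑ t ∈ Finset.Icc 1 Tmax,
        ∑ e ∈ Finset.univ.filter (fun e : Fin 4 × Fin 4 => e.1 = 0 ∧ e.2 ≠ 0), X t e ≤ 1) :
    ∑ t ∈ Finset.Icc 1 Tmax,
        ∑ e ∈ Finset.univ.filter (fun e : Fin 4 × Fin 4 => e.1 ≠ 0 ∧ e.2 = 0), X t e ≤ 1 := by
  set Z : ℕ → ℕ := fun t =>
    ∑ e ∈ Finset.univ.filter (fun e : Fin 4 × Fin 4 => e.1 = 0), X t e with hZ
  set B : ℕ → ℕ := fun t =>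
    ∑ e ∈ Finset.univ.filter (fun e : Fin 4 × Fin 4 => e.1 = 0 ∧ e.2 ≠ 0), X t e with hB
  set D : ℕ → ℕ := fun t =>
    ∑ e ∈ Finset.univ.filter (fun e : Fin 4 × Fin 4 => e.1 ≠ 0 ∧ e.2 = 0), X t e with hD
  -- Z 1 = 1
  have hZ1 : Z 1 = 1 := by
    have h0 : ∑ e ∈ Finset.univ.filter (fun e : Fin 4 × Fin 4 => ¬ e.1 = 0), X 1 e = 0 := by
      refine Finset.sum_eq_zero fun e he => ?_
      simp only [Finset.mem_filter] at he
      rcases hbin 1 e with h | h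
      · exact h
      · exact absurd (hstart e h) he.2
    have := total_split (X 1)
    rw [hone 1 le_rfl hT, h0] at this
    simp only [hZ]
    omega
  -- step identity
  have hstep : ∀ t, 1 ≤ t → t < Tmax → Z (t + 1) + B t = Z t + D t := by
    intro t h1 h2
    have hc := hcont 0 t h1 h2
    have hs := split_eq (X t)
    simp only [hZ, hB, hD]
    omega
  -- telescoping claim
  have claim : ∀ n, 1 ≤ n → n ≤ Tmax →
      Z n + ∑ t ∈ Finset.Ico 1 n, B t = 1 + ∑ t ∈ Finset.Ico 1 n, D t := by
    intro n h1
    induction n, h1 using Nat.le_induction with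
    | base => intro _; simp [hZ1]
    | succ m hm ih =>
      intro h2
      have ihm := ih (by omega)
      rw [Finset.sum_Ico_succ_top hm, Finset.sum_Ico_succ_top hm]
      have := hstep m hm (by omega)
      omega
  have hmain := claim Tmax hT le_rfl
  -- final bound
  have hlast : Z Tmax + D Tmax ≤ 1 := by
    have := bound_le (X Tmax)
    rw [hone Tmax hT le_rfl] at this
    simp only [hZ, hD]
    omega
  have hIcc : ∀ f : ℕ → ℕ, ∑ t ∈ Finset.Icc 1 Tmax, f t
      = ∑ t ∈ Finset.Ico 1 Tmax, f t + f Tmax := by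
    intro f
    rw [← Finset.Ico_add_one_right_eq_Icc, Finset.sum_Ico_succ_top hT]
  have hB' : ∑ t ∈ Finset.Ico 1 Tmax, B t + B Tmax ≤ 1 := by
    rw [← hIcc B]; exact hbuy
  rw [hIcc D]
  omega
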